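/- arXiv:1904.13110 — 5 statements merged into one kernel-verified Lean document; each statement's English description precedes it below -/
import Mathlib

section
/- With the setting of the previous context, the two eigenvalues of H_s = (I_s + μ·diag(G_{s−1,1}, 0))^{-1}(I_s + μ G_{s,1}) that may differ from 1 are λ_min = 1 − √(1 − d_s) and λ_max = 1 + √(1 − d_s), where d_s = 1 / (e_s^T (I_s + μ G_{s,1})^{-1} e_s). -/
/-!
Write `A = I + μ G_{s,1}` and `B = I + μ diag(G_{s-1,1}, 0)`, and let `p = s - 1`, `l = s` be the
last two indices. Then `A = B + K (E_pl + E_lp)` with `K = μ √β_{s-1}`, and `B` fixes `e_l` on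
both sides, so `B⁻¹ A x = x + K x_l B⁻¹ e_p + K x_p e_l`. Reading this at the coordinates `p` and
`l` gives a `2 × 2` system: an eigenvalue `c ≠ 1` of `H_s = B⁻¹ A` satisfies
`(c - 1)² = K² (B⁻¹)_pp`, while the same system for `A⁻¹ e_l` gives
`(A⁻¹)_ll (1 - K² (B⁻¹)_pp) = 1`, i.e. `1 - d_s = K² (B⁻¹)_pp`. The matrix `B` is invertible since
Laplace expansion along its last column `e_l` gives `det B = det (I + μ G_{s-1,1})`.
-/

open Matrix

noncomputable def jacobiMatrix (s : ℕ) (b : ℕ → ℝ) : Matrix (Fin s) (Fin s) ℝ :=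
  Matrix.of fun i j =>
    if (i : ℕ) + 1 = (j : ℕ) then Real.sqrt (b ((i : ℕ) + 1))
    else if (j : ℕ) + 1 = (i : ℕ) then Real.sqrt (b ((j : ℕ) + 1)) else 0

noncomputable def jacobiMatrixTrunc (s : ℕ) (b : ℕ → ℝ) : Matrix (Fin s) (Fin s) ℝ :=
  Matrix.of fun i j =>
    if (i : ℕ) + 1 = s ∨ (j : ℕ) + 1 = s then 0 else jacobiMatrix s b i j

namespace Matrix

variable {𝕜 n : Type*} [Field 𝕜] [Fintype n] [DecidableEq n] {A B : Matrix n n 𝕜} {p l : n}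
  {K : 𝕜}

lemma inv_mulVec_single_of_mulVec_single (hB : IsUnit B.det)
    (hl : B *ᵥ Pi.single l 1 = Pi.single l 1) : B⁻¹ *ᵥ Pi.single l 1 = Pi.single l 1 := by
  conv_lhs => rw [← hl, mulVec_mulVec, nonsing_inv_mul _ hB, one_mulVec]

lemma inv_mulVec_apply_of_single_vecMul (hB : IsUnit B.det)
    (hl : Pi.single l 1 ᵥ* B = Pi.single l 1) (x : n → 𝕜) : (B⁻¹ *ᵥ x) l = x l := by
  have hl' : Pi.single l 1 ᵥ* B⁻¹ = Pi.single l 1 := by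
    conv_lhs => rw [← hl, vecMul_vecMul, mul_nonsing_inv _ hB, vecMul_one]
  calc (B⁻¹ *ᵥ x) l = Pi.single l 1 ⬝ᵥ (B⁻¹ *ᵥ x) := by rw [single_dotProduct, one_mul]
    _ = x l := by rw [dotProduct_mulVec, hl', single_dotProduct, one_mul]

lemma inv_mulVec_mulVec_of_eq_add_symm_single (hB : IsUnit B.det)
    (hl : B *ᵥ Pi.single l 1 = Pi.single l 1)
    (hA : A = B + K • (single p l 1 + single l p 1)) (x : n → 𝕜) :
    B⁻¹ *ᵥ (A *ᵥ x) =
      x + (K * x l) • (B⁻¹ *ᵥ Pi.single p 1) + (K * x p) • Pi.single l 1 := by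
  simp only [hA, add_mulVec, smul_mulVec, single_mulVec_eq, mulVec_add, mulVec_smul,
    mulVec_mulVec, nonsing_inv_mul _ hB, one_mulVec, inv_mulVec_single_of_mulVec_single hB hl,
    smul_add, smul_smul, one_mul, add_assoc]

lemma inv_mulVec_mulVec_apply_snd_of_eq_add_symm_single (hB : IsUnit B.det)
    (hl : B *ᵥ Pi.single l 1 = Pi.single l 1) (hl' : Pi.single l 1 ᵥ* B = Pi.single l 1)
    (hpl : p ≠ l) (hA : A = B + K • (single p l 1 + single l p 1)) (x : n → 𝕜) :
    (B⁻¹ *ᵥ (A *ᵥ x)) l = x l + K * x p := by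
  rw [inv_mulVec_mulVec_of_eq_add_symm_single hB hl hA]
  simp only [Pi.add_apply, Pi.smul_apply, smul_eq_mul, inv_mulVec_apply_of_single_vecMul hB hl',
    Pi.single_eq_of_ne hpl.symm, Pi.single_eq_same]
  ring

lemma inv_mulVec_mulVec_apply_fst_of_eq_add_symm_single (hB : IsUnit B.det)
    (hl : B *ᵥ Pi.single l 1 = Pi.single l 1) (hpl : p ≠ l)
    (hA : A = B + K • (single p l 1 + single l p 1)) (x : n → 𝕜) :
    (B⁻¹ *ᵥ (A *ᵥ x)) p = x p + K * x l * B⁻¹ p p := by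
  rw [inv_mulVec_mulVec_of_eq_add_symm_single hB hl hA]
  simp [hpl, mul_assoc]

lemma sub_one_sq_eq_of_inv_mul_mulVec_eq_smul (hB : IsUnit B.det)
    (hl : B *ᵥ Pi.single l 1 = Pi.single l 1) (hl' : Pi.single l 1 ᵥ* B = Pi.single l 1)
    (hpl : p ≠ l) (hA : A = B + K • (single p l 1 + single l p 1)) {c : 𝕜} {v : n → 𝕜}
    (hv : v ≠ 0) (hc : c ≠ 1) (hcv : (B⁻¹ * A) *ᵥ v = c • v) :
    (c - 1) ^ 2 = K ^ 2 * B⁻¹ p p := by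
  rw [← mulVec_mulVec] at hcv
  have hvl : c * v l = v l + K * v p := by
    rw [← inv_mulVec_mulVec_apply_snd_of_eq_add_symm_single hB hl hl' hpl hA, hcv,
      Pi.smul_apply, smul_eq_mul]
  have hvp : c * v p = v p + K * v l * B⁻¹ p p := by
    rw [← inv_mulVec_mulVec_apply_fst_of_eq_add_symm_single hB hl hpl hA, hcv,
      Pi.smul_apply, smul_eq_mul]
  -- if `v l = 0` the perturbation does not see `v`, so `c = 1`
  have hvl0 : v l ≠ 0 := by
    intro hvl0
    have hKvp : K * v p = 0 := by rw [hvl0] at hvl; linear_combination -hvl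
    have hcv' := hcv
    rw [inv_mulVec_mulVec_of_eq_add_symm_single hB hl hA, hvl0, hKvp, mul_zero, zero_smul,
      zero_smul, add_zero, add_zero] at hcv'
    exact hc (smul_left_injective 𝕜 hv (hcv'.symm.trans (one_smul 𝕜 v).symm))
  refine mul_right_cancel₀ hvl0 ?_
  linear_combination (c - 1) * hvl + K * hvp

lemma inv_apply_mul_one_sub_eq_one (hA' : IsUnit A.det) (hB : IsUnit B.det)
    (hl : B *ᵥ Pi.single l 1 = Pi.single l 1) (hl' : Pi.single l 1 ᵥ* B = Pi.single l 1)
    (hpl : p ≠ l) (hA : A = B + K • (single p l 1 + single l p 1)) :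
    A⁻¹ l l * (1 - K ^ 2 * B⁻¹ p p) = 1 := by
  set u := A⁻¹ *ᵥ Pi.single l 1
  have hu : B⁻¹ *ᵥ (A *ᵥ u) = Pi.single l 1 := by
    rw [show A *ᵥ u = Pi.single l 1 by rw [mulVec_mulVec, mul_nonsing_inv _ hA', one_mulVec],
      inv_mulVec_single_of_mulVec_single hB hl]
  have hul := inv_mulVec_mulVec_apply_snd_of_eq_add_symm_single hB hl hl' hpl hA u
  have hup := inv_mulVec_mulVec_apply_fst_of_eq_add_symm_single hB hl hpl hA u
  rw [hu, Pi.single_eq_same] at hul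
  rw [hu, Pi.single_eq_of_ne hpl] at hup
  have hull : u l = A⁻¹ l l := by simp [u]
  rw [← hull]
  linear_combination -hul + K * hup

end Matrix

section Jacobi

variable (b : ℕ → ℝ)

lemma jacobiMatrix_eq_jacobiMatrixTrunc_add (m : ℕ) :
    jacobiMatrix (m + 2) b = jacobiMatrixTrunc (m + 2) b
      + √(b (m + 1)) • (single (⟨m, by omega⟩ : Fin (m + 2)) ⟨m + 1, by omega⟩ 1
          + single (⟨m + 1, by omega⟩ : Fin (m + 2)) ⟨m, by omega⟩ 1) := by
  ext ⟨i, hi⟩ ⟨j, hj⟩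
  simp only [jacobiMatrix, jacobiMatrixTrunc, Matrix.add_apply, Matrix.smul_apply, of_apply,
    single, Fin.mk.injEq, smul_eq_mul]
  split_ifs <;> first | omega | (obtain ⟨rfl, rfl⟩ := ‹_ ∧ _›; ring_nf) | ring_nf

variable {b} in
lemma jacobiMatrixTrunc_apply_last_col {s : ℕ} (i : Fin s) {j : Fin s} (hj : (j : ℕ) + 1 = s) :
    jacobiMatrixTrunc s b i j = 0 :=
  if_pos (Or.inr hj)

variable {b} in
lemma jacobiMatrixTrunc_apply_last_row {s : ℕ} {i : Fin s} (hi : (i : ℕ) + 1 = s) (j : Fin s) :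
    jacobiMatrixTrunc s b i j = 0 :=
  if_pos (Or.inl hi)

lemma jacobiMatrixTrunc_submatrix_castSucc (m : ℕ) :
    (jacobiMatrixTrunc (m + 2) b).submatrix Fin.castSucc Fin.castSucc = jacobiMatrix (m + 1) b := by
  ext ⟨i, hi⟩ ⟨j, hj⟩
  simp only [submatrix_apply, jacobiMatrixTrunc, jacobiMatrix, of_apply, Fin.val_castSucc]
  split_ifs <;> first | rfl | omega

variable (μ : ℝ)

lemma one_add_smul_jacobiMatrixTrunc_mulVec_single {s : ℕ} {l : Fin s} (hl : (l : ℕ) + 1 = s) :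
    (1 + μ • jacobiMatrixTrunc s b) *ᵥ Pi.single l 1 = Pi.single l 1 := by
  ext i
  simp [jacobiMatrixTrunc_apply_last_col i hl, one_apply, Pi.single_apply]

lemma single_vecMul_one_add_smul_jacobiMatrixTrunc {s : ℕ} {l : Fin s} (hl : (l : ℕ) + 1 = s) :
    Pi.single l 1 ᵥ* (1 + μ • jacobiMatrixTrunc s b) = Pi.single l 1 := by
  ext j
  simp [jacobiMatrixTrunc_apply_last_row hl j, one_apply, Pi.single_apply, eq_comm]

lemma det_one_add_smul_jacobiMatrixTrunc (m : ℕ) :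
    (1 + μ • jacobiMatrixTrunc (m + 2) b).det = (1 + μ • jacobiMatrix (m + 1) b).det := by
  have hlast : ((Fin.last (m + 1) : Fin (m + 2)) : ℕ) + 1 = m + 2 := rfl
  rw [det_succ_column _ (Fin.last _), Fintype.sum_eq_single (Fin.last _)]
  · simp [Fin.succAbove_last, ← jacobiMatrixTrunc_submatrix_castSucc, submatrix_add,
      submatrix_smul, submatrix_one _ (Fin.castSucc_injective _),
      jacobiMatrixTrunc_apply_last_col _ hlast]
  · intro i hi
    simp [hi, jacobiMatrixTrunc_apply_last_col i hlast]

end Jacobi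

lemma eq_one_sub_sqrt_or_eq_one_add_sqrt {c x : ℝ} (h : x = (c - 1) ^ 2) :
    c = 1 - √x ∨ c = 1 + √x := by
  rw [h, Real.sqrt_sq_eq_abs]
  rcases le_total c 1 with hc | hc
  · left; rw [abs_of_nonpos (by linarith)]; ring
  · right; rw [abs_of_nonneg (by linarith)]; ring

theorem stmt_5_general (s : ℕ) (hs : 2 ≤ s) (b : ℕ → ℝ) (μ : ℝ)
    (hpd : ((1 : Matrix (Fin s) (Fin s) ℝ) + μ • jacobiMatrix s b).PosDef)
    (hpd' : ((1 : Matrix (Fin (s - 1)) (Fin (s - 1)) ℝ) + μ • jacobiMatrix (s - 1) b).PosDef)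
    (es : Fin s → ℝ) (hes : es = fun i : Fin s => if (i : ℕ) + 1 = s then (1:ℝ) else 0)
    (d : ℝ)
    (hd : d = 1 / (es ⬝ᵥ (((1 : Matrix (Fin s) (Fin s) ℝ) + μ • jacobiMatrix s b)⁻¹ *ᵥ es))) :
    ∀ (c : ℝ) (v : Fin s → ℝ), v ≠ 0 →
      (((1 : Matrix (Fin s) (Fin s) ℝ) + μ • jacobiMatrixTrunc s b)⁻¹ *
          ((1 : Matrix (Fin s) (Fin s) ℝ) + μ • jacobiMatrix s b)) *ᵥ v = c • v →
        c = 1 ∨ c = 1 - Real.sqrt (1 - d) ∨ c = 1 + Real.sqrt (1 - d) := by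
  obtain ⟨m, rfl⟩ : ∃ m, s = m + 2 := ⟨s - 2, by omega⟩
  intro c v hv hcv
  set p : Fin (m + 2) := ⟨m, by omega⟩
  set l : Fin (m + 2) := ⟨m + 1, by omega⟩
  have hl : (l : ℕ) + 1 = m + 2 := rfl
  have hpl : p ≠ l := by simp [p, l]
  have hA : 1 + μ • jacobiMatrix (m + 2) b = (1 + μ • jacobiMatrixTrunc (m + 2) b)
      + (μ * √(b (m + 1))) • (single p l 1 + single l p 1) := by
    rw [jacobiMatrix_eq_jacobiMatrixTrunc_add, smul_add, smul_smul, add_assoc]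
  have hB : IsUnit (1 + μ • jacobiMatrixTrunc (m + 2) b).det := by
    rw [det_one_add_smul_jacobiMatrixTrunc]
    exact hpd'.det_pos.ne'.isUnit
  have hBl := one_add_smul_jacobiMatrixTrunc_mulVec_single b μ hl
  have hBl' := single_vecMul_one_add_smul_jacobiMatrixTrunc b μ hl
  have hes' : es = Pi.single l 1 := by
    ext ⟨i, hi⟩
    simp only [hes, Pi.single_apply, l, Fin.mk.injEq, Nat.add_right_cancel_iff]
  have hdt : 1 - d = (μ * √(b (m + 1))) ^ 2 * (1 + μ • jacobiMatrixTrunc (m + 2) b)⁻¹ p p := by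
    rw [hd, hes', mulVec_single_one, single_dotProduct, one_mul, col_apply,
      ← eq_one_div_of_mul_eq_one_right
        (inv_apply_mul_one_sub_eq_one hpd.det_pos.ne'.isUnit hB hBl hBl' hpl hA)]
    ring
  by_cases hc : c = 1
  · exact Or.inl hc
  exact Or.inr <| eq_one_sub_sqrt_or_eq_one_add_sqrt <|
    hdt.trans (sub_one_sq_eq_of_inv_mul_mulVec_eq_smul hB hBl hBl' hpl hA hv hc hcv).symm

/-- each eigenvalue of H_s equals 1, 1 − √(1 − d_s) or 1 + √(1 − d_s),
where d_s = 1/(e_s^T (I + μ G_{s,1})⁻¹ e_s)  (Lemma 4.9). -/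
theorem stmt_5 (s : ℕ) (hs : 2 ≤ s) (b : ℕ → ℝ) (hb : ∀ n, 0 < b n) (μ : ℝ) (hμ : 0 ≤ μ)
    (hpd : ((1 : Matrix (Fin s) (Fin s) ℝ) + μ • jacobiMatrix s b).PosDef)
    (hpd' : ((1 : Matrix (Fin (s - 1)) (Fin (s - 1)) ℝ) + μ • jacobiMatrix (s - 1) b).PosDef)
    (es : Fin s → ℝ) (hes : es = fun i : Fin s => if (i : ℕ) + 1 = s then (1:ℝ) else 0)
    (d : ℝ)
    (hd : d = 1 / (es ⬝ᵥ (((1 : Matrix (Fin s) (Fin s) ℝ) + μ • jacobiMatrix s b)⁻¹ *ᵥ es))) :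
    ∀ (c : ℝ) (v : Fin s → ℝ), v ≠ 0 →
      (((1 : Matrix (Fin s) (Fin s) ℝ) + μ • jacobiMatrixTrunc s b)⁻¹ *
          ((1 : Matrix (Fin s) (Fin s) ℝ) + μ • jacobiMatrix s b)) *ᵥ v = c • v →
        c = 1 ∨ c = 1 - Real.sqrt (1 - d) ∨ c = 1 + Real.sqrt (1 - d) :=
  stmt_5_general s hs b μ hpd hpd' es hes d hd
end

section
/- Let G be the 3×3 symmetric tridiagonal matrix with zero diagonal and off-diagonal entries 1/√3 and 2/√15. For all v ∈ ℝ³ and all real a₀ > 0, a₁ with |a₁| ≤ a₀: (1 − √15/5) a₀ v^T v ≤ v^T (a₀ I + a₁ G) v ≤ (1 + √15/5) a₀ v^T v. Consequently, if A = I ⊗ F₀ + G ⊗ F₁ with F₀ symmetric positive definite and F₁ = c F₀ with |c| ≤ 1, and M = I ⊗ F₀, then κ(M^{-1}A) ≤ 4 + √15. -/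
/-!
The Jacobi matrix `G` is symmetric with `|vᵀ G v| ≤ ρ vᵀv` for `ρ = √15 / 5`: after scaling by
`√15`, both `3‖v‖² ± √15 vᵀGv` are explicit sums of squares. Hence `ρ • 1 ± G` is positive
semidefinite, and so is its Kronecker product with `F₀`, which bounds the generalized Rayleigh
quotient of `A = I ⊗ F₀ + c (G ⊗ F₀)` relative to `M = I ⊗ F₀`. Every generalized eigenvalue
therefore lies in `[1 - ρ, 1 + ρ]`, and `(1 + ρ) / (1 - ρ) = 4 + √15`.
-/

open Matrix Kronecker

section QuadraticForm

variable {ι κ : Type*} [Fintype ι] [DecidableEq ι] [Fintype κ]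

lemma dotProduct_smul_one_add_smul_mulVec {R : Type*} [CommSemiring R]
    (B : Matrix ι ι R) (a b : R) (v : ι → R) :
    v ⬝ᵥ ((a • (1 : Matrix ι ι R) + b • B) *ᵥ v) = a * (v ⬝ᵥ v) + b * (v ⬝ᵥ (B *ᵥ v)) := by
  rw [add_mulVec, dotProduct_add, smul_mulVec, smul_mulVec, one_mulVec, dotProduct_smul,
    dotProduct_smul, smul_eq_mul, smul_eq_mul]

variable {B : Matrix ι ι ℝ} {ρ : ℝ}

lemma quadForm_bounds_of_abs_le (hB : ∀ v, |v ⬝ᵥ (B *ᵥ v)| ≤ ρ * (v ⬝ᵥ v)) (v : ι → ℝ)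
    {a0 a1 : ℝ} (ha : |a1| ≤ a0) :
    (1 - ρ) * a0 * (v ⬝ᵥ v) ≤ v ⬝ᵥ ((a0 • (1 : Matrix ι ι ℝ) + a1 • B) *ᵥ v) ∧
      v ⬝ᵥ ((a0 • (1 : Matrix ι ι ℝ) + a1 • B) *ᵥ v) ≤ (1 + ρ) * a0 * (v ⬝ᵥ v) := by
  have h : |a1 * (v ⬝ᵥ (B *ᵥ v))| ≤ a0 * (ρ * (v ⬝ᵥ v)) := by
    rw [abs_mul]
    exact mul_le_mul ha (hB v) (abs_nonneg _) ((abs_nonneg a1).trans ha)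
  rw [dotProduct_smul_one_add_smul_mulVec]
  constructor <;> linarith [abs_le.mp h]

lemma posSemidef_smul_one_add_smul (hBh : B.IsHermitian)
    (hB : ∀ v, |v ⬝ᵥ (B *ᵥ v)| ≤ ρ * (v ⬝ᵥ v)) {t : ℝ} (ht : |t| ≤ 1) :
    (ρ • (1 : Matrix ι ι ℝ) + t • B).PosSemidef := by
  refine .of_dotProduct_mulVec_nonneg ((isHermitian_one.smul (.all ρ)).add (hBh.smul (.all t))) fun v => ?_
  have h : |t * (v ⬝ᵥ (B *ᵥ v))| ≤ ρ * (v ⬝ᵥ v) := by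
    rw [abs_mul]
    exact (mul_le_of_le_one_left (abs_nonneg _) ht).trans (hB v)
  rw [star_trivial, dotProduct_smul_one_add_smul_mulVec]
  linarith [neg_abs_le (t * (v ⬝ᵥ (B *ᵥ v)))]

lemma abs_dotProduct_kronecker_mulVec_le (hBh : B.IsHermitian)
    (hB : ∀ v, |v ⬝ᵥ (B *ᵥ v)| ≤ ρ * (v ⬝ᵥ v)) {F : Matrix κ κ ℝ} (hF : F.PosSemidef)
    (w : ι × κ → ℝ) :
    |w ⬝ᵥ ((B ⊗ₖ F) *ᵥ w)| ≤ ρ * (w ⬝ᵥ (((1 : Matrix ι ι ℝ) ⊗ₖ F) *ᵥ w)) := by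
  have key : ∀ t : ℝ, |t| ≤ 1 →
      0 ≤ ρ * (w ⬝ᵥ (((1 : Matrix ι ι ℝ) ⊗ₖ F) *ᵥ w)) + t * (w ⬝ᵥ ((B ⊗ₖ F) *ᵥ w)) := by
    intro t ht
    have := ((posSemidef_smul_one_add_smul hBh hB ht).kronecker hF).dotProduct_mulVec_nonneg w
    rwa [star_trivial, add_kronecker, smul_kronecker, smul_kronecker, add_mulVec, dotProduct_add,
      smul_mulVec, smul_mulVec, dotProduct_smul, dotProduct_smul, smul_eq_mul,
      smul_eq_mul] at this
  rw [abs_le]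
  constructor <;> linarith [key 1 (by simp), key (-1) (by simp)]

end QuadraticForm

lemma generalizedEigenvalue_mem_Icc {κ : Type*} [Fintype κ] {M K : Matrix κ κ ℝ}
    (hM : M.PosDef) {ρ c μ : ℝ} {w : κ → ℝ} (hw : w ≠ 0)
    (hK : |w ⬝ᵥ (K *ᵥ w)| ≤ ρ * (w ⬝ᵥ (M *ᵥ w))) (hc : |c| ≤ 1)
    (h : (M + c • K) *ᵥ w = μ • (M *ᵥ w)) :
    μ ∈ Set.Icc (1 - ρ) (1 + ρ) := by
  have hm : 0 < w ⬝ᵥ (M *ᵥ w) := by simpa using hM.dotProduct_mulVec_pos hw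
  have hμ : w ⬝ᵥ (M *ᵥ w) + c * (w ⬝ᵥ (K *ᵥ w)) = μ * (w ⬝ᵥ (M *ᵥ w)) := by
    simpa [add_mulVec, smul_mulVec] using congrArg (w ⬝ᵥ ·) h
  have hcK : |c * (w ⬝ᵥ (K *ᵥ w))| ≤ ρ * (w ⬝ᵥ (M *ᵥ w)) := by
    rw [abs_mul]
    exact (mul_le_of_le_one_left (abs_nonneg _) hc).trans hK
  obtain ⟨hlo, hhi⟩ := abs_le.mp hcK
  constructor
  · exact le_of_mul_le_mul_right (by linarith) hm
  · exact le_of_mul_le_mul_right (by linarith) hm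

noncomputable def legendreJacobi3 : Matrix (Fin 3) (Fin 3) ℝ :=
  !![0, 1 / √3, 0;
     1 / √3, 0, 2 / √15;
     0, 2 / √15, 0]

lemma legendreJacobi3_isHermitian : legendreJacobi3.IsHermitian := by
  ext i j
  fin_cases i <;> fin_cases j <;> simp [legendreJacobi3]

lemma abs_dotProduct_legendreJacobi3_mulVec_le (v : Fin 3 → ℝ) :
    |v ⬝ᵥ (legendreJacobi3 *ᵥ v)| ≤ √15 / 5 * (v ⬝ᵥ v) := by
  have h5 : √5 ^ 2 = 5 := Real.sq_sqrt (by norm_num)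
  have h15 : √15 = √3 * √5 := by rw [← Real.sqrt_mul] <;> norm_num
  have hq : √15 * (v ⬝ᵥ (legendreJacobi3 *ᵥ v)) = 2 * √5 * (v 0 * v 1) + 4 * (v 1 * v 2) := by
    simp only [h15, dotProduct, mulVec, legendreJacobi3, one_div, of_apply, cons_val',
      cons_val_fin_one, Fin.sum_univ_three, cons_val_zero, cons_val_one, cons_val, zero_mul,
      zero_add, add_zero]
    field_simp
    ring
  have hS : √15 * (√15 / 5 * (v ⬝ᵥ v)) = 3 * (v 0 ^ 2 + v 1 ^ 2 + v 2 ^ 2) := by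
    rw [← mul_assoc, ← mul_div_assoc, Real.mul_self_sqrt (by norm_num), dotProduct,
      Fin.sum_univ_three]
    ring
  have h15pos : 0 < √15 := by positivity
  refine le_of_mul_le_mul_left ?_ h15pos
  rw [← abs_of_pos h15pos, ← abs_mul, hq, abs_of_pos h15pos, hS, abs_le]
  -- `3‖v‖² ± (2√5 v₀v₁ + 4v₁v₂) = ((√5 v₀ ± 3v₁ + 2v₂)² + (2v₀ - √5 v₂)²) / 3`
  constructor
  · nlinarith [sq_nonneg (√5 * v 0 + 3 * v 1 + 2 * v 2), sq_nonneg (2 * v 0 - √5 * v 2)]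
  · nlinarith [sq_nonneg (√5 * v 0 - 3 * v 1 + 2 * v 2), sq_nonneg (2 * v 0 - √5 * v 2)]

/-- Example 3.5 — quadratic form bounds for a₀I + a₁G with the
3×3 Legendre Jacobi matrix G, and the resulting bound κ(M⁻¹A) ≤ 4 + √15 for
mean-based preconditioning. -/
theorem stmt_10 (G : Matrix (Fin 3) (Fin 3) ℝ)
    (hG : G = !![0, 1 / Real.sqrt 3, 0;
                 1 / Real.sqrt 3, 0, 2 / Real.sqrt 15;
                 0, 2 / Real.sqrt 15, 0]) :
    (∀ (v : Fin 3 → ℝ) (a0 a1 : ℝ), 0 < a0 → |a1| ≤ a0 →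
      (1 - Real.sqrt 15 / 5) * a0 * (v ⬝ᵥ v) ≤
          v ⬝ᵥ ((a0 • (1 : Matrix (Fin 3) (Fin 3) ℝ) + a1 • G) *ᵥ v) ∧
        v ⬝ᵥ ((a0 • (1 : Matrix (Fin 3) (Fin 3) ℝ) + a1 • G) *ᵥ v) ≤
          (1 + Real.sqrt 15 / 5) * a0 * (v ⬝ᵥ v)) ∧
    (∀ (n : ℕ) (F0 F1 : Matrix (Fin n) (Fin n) ℝ) (c : ℝ), F0.PosDef → F1 = c • F0 →
      |c| ≤ 1 →
      ∀ (c1 c2 : ℝ) (v1 v2 : Fin 3 × Fin n → ℝ), v1 ≠ 0 → v2 ≠ 0 →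
        (((1 : Matrix (Fin 3) (Fin 3) ℝ) ⊗ₖ F0 + G ⊗ₖ F1) *ᵥ v1 =
          c1 • (((1 : Matrix (Fin 3) (Fin 3) ℝ) ⊗ₖ F0) *ᵥ v1)) →
        (((1 : Matrix (Fin 3) (Fin 3) ℝ) ⊗ₖ F0 + G ⊗ₖ F1) *ᵥ v2 =
          c2 • (((1 : Matrix (Fin 3) (Fin 3) ℝ) ⊗ₖ F0) *ᵥ v2)) →
        c1 ≤ (4 + Real.sqrt 15) * c2) := by
  obtain rfl : G = legendreJacobi3 := hG
  have hρ := abs_dotProduct_legendreJacobi3_mulVec_le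
  refine ⟨fun v a0 a1 _ ha => quadForm_bounds_of_abs_le hρ v ha, ?_⟩
  rintro n F0 F1 c hF0 rfl hc c1 c2 v1 v2 hv1 hv2 he1 he2
  have hM : ((1 : Matrix (Fin 3) (Fin 3) ℝ) ⊗ₖ F0).PosDef := PosDef.one.kronecker hF0
  have hK := abs_dotProduct_kronecker_mulVec_le legendreJacobi3_isHermitian hρ hF0.posSemidef
  rw [kronecker_smul] at he1 he2
  have hc1 := (generalizedEigenvalue_mem_Icc hM hv1 (hK v1) hc he1).2
  have hc2 := (generalizedEigenvalue_mem_Icc hM hv2 (hK v2) hc he2).1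
  have h15 : √15 ^ 2 = 15 := Real.sq_sqrt (by norm_num)
  calc c1 ≤ 1 + √15 / 5 := hc1
    _ = (4 + √15) * (1 - √15 / 5) := by linear_combination h15 / 5
    _ ≤ (4 + √15) * c2 := by gcongr
end

section
/- Under the assumptions: A = Σ_j (Σ_{k=0}^K a_k^{(j)} G_k) ⊗ F^{(j)} and M = Σ_j (a_0^{(j)} G_0) ⊗ F^{(j)}, where G_0 = I, each G_k is symmetric with spectral radius ≤ λ, each F^{(j)} is symmetric positive semidefinite, a_0^{(j)} > 0, Σ_{k=1}^K |a_k^{(j)}| ≤ μ a_0^{(j)}, μλ < 1, and M is positive definite. Then every eigenvalue of M^{-1}A lies in [1 − μλ, 1 + μλ], and hence κ(M^{-1}A) ≤ (1 + μλ)/(1 − μλ). -/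
open Matrix

open Kronecker

/-!
Write `A - M = ∑ⱼ (∑ₖ aⱼₖ Gₖ) ⊗ Fⱼ`. The spectral bound on `Gₖ` makes `λ I ∓ Gₖ` positive
semidefinite, hence so is `(λ I ∓ Gₖ) ⊗ Fⱼ`, i.e. `|vᵀ (Gₖ ⊗ Fⱼ) v| ≤ λ vᵀ (I ⊗ Fⱼ) v`. Summing
with the weights `∑ₖ |aⱼₖ| ≤ μ a₀ⱼ` gives `|vᵀ (A - M) v| ≤ μλ vᵀ M v`, which for an eigenpair
`A v = c M v` reads `|c - 1| ≤ μλ`. The condition-number bound follows since all eigenvalues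
lie in `[1 - μλ, 1 + μλ]` and `1 - μλ > 0`.
-/

namespace Matrix

section Kronecker

variable {ι l m n p α : Type*}

theorem sum_kronecker [CommSemiring α] (s : Finset ι) (X : ι → Matrix l m α)
    (B : Matrix n p α) : (∑ i ∈ s, X i) ⊗ₖ B = ∑ i ∈ s, X i ⊗ₖ B :=
  map_sum ((kroneckerBilinear (R := α) (α := α)).flip B) X s

theorem sub_kronecker [CommRing α] (A₁ A₂ : Matrix l m α) (B : Matrix n p α) :
    (A₁ - A₂) ⊗ₖ B = A₁ ⊗ₖ B - A₂ ⊗ₖ B :=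
  map_sub ((kroneckerBilinear (R := α) (α := α)).flip B) A₁ A₂

end Kronecker

variable {m n : Type*} [Fintype m] [Fintype n] [DecidableEq m]

theorem IsHermitian.posSemidef_of_eigen_nonneg {H : Matrix m m ℝ} (hH : H.IsHermitian)
    (h : ∀ (c : ℝ) (v : m → ℝ), v ≠ 0 → H *ᵥ v = c • v → 0 ≤ c) : H.PosSemidef :=
  hH.posSemidef_iff_eigenvalues_nonneg.2 fun i =>
    h _ _ (by simpa using hH.eigenvectorBasis.toBasis.ne_zero i) (hH.mulVec_eigenvectorBasis i)

theorem IsSymm.posSemidef_smul_one_sub_and_add {G : Matrix m m ℝ} (hG : G.IsSymm) {lam : ℝ}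
    (h : ∀ (c : ℝ) (v : m → ℝ), v ≠ 0 → G *ᵥ v = c • v → |c| ≤ lam) :
    (lam • 1 - G).PosSemidef ∧ (lam • 1 + G).PosSemidef := by
  have hG' : G.IsHermitian := isHermitian_iff_isSymm.2 hG
  have hI : (lam • 1 : Matrix m m ℝ).IsHermitian := isHermitian_one.smul (IsSelfAdjoint.all lam)
  constructor
  · refine (hI.sub hG').posSemidef_of_eigen_nonneg fun e v hv hev => ?_
    have : G *ᵥ v = (lam - e) • v := by
      rw [sub_smul, ← hev, sub_mulVec, smul_mulVec, one_mulVec, sub_sub_cancel]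
    linarith [(abs_le.1 (h _ v hv this)).2]
  · refine (hI.add hG').posSemidef_of_eigen_nonneg fun e v hv hev => ?_
    have : G *ᵥ v = (e - lam) • v := by
      rw [sub_smul, ← hev, add_mulVec, smul_mulVec, one_mulVec, add_sub_cancel_left]
    linarith [(abs_le.1 (h _ v hv this)).1]

theorem abs_dotProduct_mulVec_le_of_posSemidef {P Q : Matrix n n ℝ} {c : ℝ}
    (h₁ : (c • P - Q).PosSemidef) (h₂ : (c • P + Q).PosSemidef) (v : n → ℝ) :
    |v ⬝ᵥ (Q *ᵥ v)| ≤ c * (v ⬝ᵥ (P *ᵥ v)) := by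
  have e₁ := h₁.dotProduct_mulVec_nonneg v
  have e₂ := h₂.dotProduct_mulVec_nonneg v
  simp only [star_trivial, sub_mulVec, add_mulVec, smul_mulVec, dotProduct_sub, dotProduct_add,
    dotProduct_smul, smul_eq_mul] at e₁ e₂
  exact abs_le.2 ⟨by linarith, by linarith⟩

theorem abs_dotProduct_kronecker_mulVec_le {G : Matrix m m ℝ} {F : Matrix n n ℝ} {lam : ℝ}
    (hG : (lam • 1 - G).PosSemidef ∧ (lam • 1 + G).PosSemidef) (hF : F.PosSemidef)
    (v : m × n → ℝ) :
    |v ⬝ᵥ ((G ⊗ₖ F) *ᵥ v)| ≤ lam * (v ⬝ᵥ (((1 : Matrix m m ℝ) ⊗ₖ F) *ᵥ v)) := by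
  refine abs_dotProduct_mulVec_le_of_posSemidef ?_ ?_ v
  · simpa only [sub_kronecker, smul_kronecker] using hG.1.kronecker hF
  · simpa only [add_kronecker, smul_kronecker] using hG.2.kronecker hF

theorem abs_dotProduct_sum_smul_kronecker_mulVec_le {κ : Type*} [Fintype κ]
    {G : κ → Matrix m m ℝ} {F : Matrix n n ℝ} {lam : ℝ}
    (hG : ∀ k, (lam • 1 - G k).PosSemidef ∧ (lam • 1 + G k).PosSemidef) (hF : F.PosSemidef)
    (a : κ → ℝ) (v : m × n → ℝ) :
    |v ⬝ᵥ (((∑ k, a k • G k) ⊗ₖ F) *ᵥ v)|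
      ≤ (∑ k, |a k|) * (lam * (v ⬝ᵥ (((1 : Matrix m m ℝ) ⊗ₖ F) *ᵥ v))) := by
  rw [sum_kronecker, sum_mulVec, dotProduct_sum, Finset.sum_mul]
  refine (Finset.abs_sum_le_sum_abs _ _).trans (Finset.sum_le_sum fun k _ => ?_)
  rw [smul_kronecker, smul_mulVec, dotProduct_smul, smul_eq_mul, abs_mul]
  exact mul_le_mul_of_nonneg_left (abs_dotProduct_kronecker_mulVec_le (hG k) hF v) (abs_nonneg _)

theorem abs_dotProduct_sum_kronecker_mulVec_le {ι κ : Type*} [Fintype ι] [Fintype κ]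
    {G : κ → Matrix m m ℝ} {F : ι → Matrix n n ℝ} {lam μ : ℝ} (hlam : 0 ≤ lam)
    (hG : ∀ k, (lam • 1 - G k).PosSemidef ∧ (lam • 1 + G k).PosSemidef)
    (hF : ∀ j, (F j).PosSemidef) (a0 : ι → ℝ) (a : ι → κ → ℝ)
    (hdom : ∀ j, ∑ k, |a j k| ≤ μ * a0 j) (v : m × n → ℝ) :
    |v ⬝ᵥ ((∑ j, (∑ k, a j k • G k) ⊗ₖ F j) *ᵥ v)|
      ≤ μ * lam * (v ⬝ᵥ ((∑ j, (a0 j • (1 : Matrix m m ℝ)) ⊗ₖ F j) *ᵥ v)) := by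
  rw [sum_mulVec, dotProduct_sum, sum_mulVec, dotProduct_sum, Finset.mul_sum]
  refine (Finset.abs_sum_le_sum_abs _ _).trans (Finset.sum_le_sum fun j _ => ?_)
  have hQ : 0 ≤ v ⬝ᵥ (((1 : Matrix m m ℝ) ⊗ₖ F j) *ᵥ v) := by
    simpa only [star_trivial] using (PosSemidef.one.kronecker (hF j)).dotProduct_mulVec_nonneg v
  calc _ ≤ (∑ k, |a j k|) * (lam * (v ⬝ᵥ (((1 : Matrix m m ℝ) ⊗ₖ F j) *ᵥ v))) :=
        abs_dotProduct_sum_smul_kronecker_mulVec_le hG (hF j) (a j) v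
    _ ≤ μ * a0 j * (lam * (v ⬝ᵥ (((1 : Matrix m m ℝ) ⊗ₖ F j) *ᵥ v))) :=
        mul_le_mul_of_nonneg_right (hdom j) (mul_nonneg hlam hQ)
    _ = μ * lam * (v ⬝ᵥ (((a0 j • (1 : Matrix m m ℝ)) ⊗ₖ F j) *ᵥ v)) := by
        rw [smul_kronecker, smul_mulVec, dotProduct_smul, smul_eq_mul]
        ring

theorem PosDef.abs_sub_one_le_of_inv_mul_mulVec_eq_smul [DecidableEq n] {A M : Matrix n n ℝ}
    (hM : M.PosDef) {δ c : ℝ} {v : n → ℝ} (hv : v ≠ 0) (hcv : (M⁻¹ * A) *ᵥ v = c • v)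
    (h : |v ⬝ᵥ ((A - M) *ᵥ v)| ≤ δ * (v ⬝ᵥ (M *ᵥ v))) : |c - 1| ≤ δ := by
  have hAv : A *ᵥ v = c • (M *ᵥ v) := by
    rw [← mulVec_smul, ← hcv, mulVec_mulVec, mul_nonsing_inv_cancel_left _ _ hM.det_pos.ne'.isUnit]
  have hq : 0 < v ⬝ᵥ (M *ᵥ v) := by
    simpa only [star_trivial] using hM.dotProduct_mulVec_pos hv
  rw [sub_mulVec, hAv, dotProduct_sub, dotProduct_smul, smul_eq_mul, ← sub_one_mul, abs_mul,
    abs_of_pos hq] at h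
  exact le_of_mul_le_mul_right h hq

end Matrix

theorem stmt_12_general {NP NFE Nel K : ℕ}
    (G : Fin K → Matrix (Fin NP) (Fin NP) ℝ) (hGsymm : ∀ k, (G k).IsSymm)
    (lam μ : ℝ) (hlam : 0 ≤ lam) (hμlam : μ * lam < 1)
    (heig : ∀ k, ∀ (c : ℝ) (v : Fin NP → ℝ), v ≠ 0 → G k *ᵥ v = c • v → |c| ≤ lam)
    (F : Fin Nel → Matrix (Fin NFE) (Fin NFE) ℝ) (hF : ∀ j, (F j).PosSemidef)
    (a0 : Fin Nel → ℝ)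
    (a : Fin Nel → Fin K → ℝ) (hdom : ∀ j, ∑ k, |a j k| ≤ μ * a0 j)
    (A M : Matrix (Fin NP × Fin NFE) (Fin NP × Fin NFE) ℝ)
    (hA : A = ∑ j, (a0 j • (1 : Matrix (Fin NP) (Fin NP) ℝ) + ∑ k, a j k • G k) ⊗ₖ F j)
    (hM : M = ∑ j, (a0 j • (1 : Matrix (Fin NP) (Fin NP) ℝ)) ⊗ₖ F j)
    (hMpd : M.PosDef) :
    (∀ (c : ℝ) (v : Fin NP × Fin NFE → ℝ), v ≠ 0 → (M⁻¹ * A) *ᵥ v = c • v →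
        1 - μ * lam ≤ c ∧ c ≤ 1 + μ * lam) ∧
      (∀ (c1 c2 : ℝ) (v1 v2 : Fin NP × Fin NFE → ℝ), v1 ≠ 0 → v2 ≠ 0 →
        (M⁻¹ * A) *ᵥ v1 = c1 • v1 → (M⁻¹ * A) *ᵥ v2 = c2 • v2 →
          c1 ≤ ((1 + μ * lam) / (1 - μ * lam)) * c2) := by
  have hG k := (hGsymm k).posSemidef_smul_one_sub_and_add (heig k)
  have hAM : A - M = ∑ j, (∑ k, a j k • G k) ⊗ₖ F j := by
    simp only [hA, hM, ← Finset.sum_sub_distrib, add_kronecker, add_sub_cancel_left]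
  have hspec (c : ℝ) (v : Fin NP × Fin NFE → ℝ) (hv : v ≠ 0) (hcv : (M⁻¹ * A) *ᵥ v = c • v) :
      1 - μ * lam ≤ c ∧ c ≤ 1 + μ * lam := by
    have h := hMpd.abs_sub_one_le_of_inv_mul_mulVec_eq_smul hv hcv <| by
      rw [hAM, hM]
      exact abs_dotProduct_sum_kronecker_mulVec_le hlam hG hF a0 a hdom v
    constructor <;> linarith [abs_le.1 h]
  refine ⟨hspec, fun c1 c2 v1 v2 h1 h2 e1 e2 => ?_⟩
  obtain ⟨lo1, hi1⟩ := hspec c1 v1 h1 e1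
  obtain ⟨lo2, -⟩ := hspec c2 v2 h2 e2
  have hpos : 0 < 1 - μ * lam := by linarith
  rw [div_mul_eq_mul_div, le_div_iff₀ hpos]
  nlinarith

/-- mean-based preconditioning — all eigenvalues of M⁻¹A lie in
[1 − μλ, 1 + μλ], hence κ(M⁻¹A) ≤ (1 + μλ)/(1 − μλ)  (Lemma 4.2 / Corollary 4.3). -/
theorem stmt_12 {NP NFE Nel K : ℕ}
    (G : Fin K → Matrix (Fin NP) (Fin NP) ℝ) (hGsymm : ∀ k, (G k).IsSymm)
    (lam μ : ℝ) (hlam : 0 ≤ lam) (hμ : 0 ≤ μ) (hμlam : μ * lam < 1)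
    (heig : ∀ k, ∀ (c : ℝ) (v : Fin NP → ℝ), v ≠ 0 → G k *ᵥ v = c • v → |c| ≤ lam)
    (F : Fin Nel → Matrix (Fin NFE) (Fin NFE) ℝ) (hF : ∀ j, (F j).PosSemidef)
    (a0 : Fin Nel → ℝ) (ha0 : ∀ j, 0 < a0 j)
    (a : Fin Nel → Fin K → ℝ) (hdom : ∀ j, ∑ k, |a j k| ≤ μ * a0 j)
    (A M : Matrix (Fin NP × Fin NFE) (Fin NP × Fin NFE) ℝ)
    (hA : A = ∑ j, (a0 j • (1 : Matrix (Fin NP) (Fin NP) ℝ) + ∑ k, a j k • G k) ⊗ₖ F j)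
    (hM : M = ∑ j, (a0 j • (1 : Matrix (Fin NP) (Fin NP) ℝ)) ⊗ₖ F j)
    (hMpd : M.PosDef) :
    (∀ (c : ℝ) (v : Fin NP × Fin NFE → ℝ), v ≠ 0 → (M⁻¹ * A) *ᵥ v = c • v →
        1 - μ * lam ≤ c ∧ c ≤ 1 + μ * lam) ∧
      (∀ (c1 c2 : ℝ) (v1 v2 : Fin NP × Fin NFE → ℝ), v1 ≠ 0 → v2 ≠ 0 →
        (M⁻¹ * A) *ᵥ v1 = c1 • v1 → (M⁻¹ * A) *ᵥ v2 = c2 • v2 →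
          c1 ≤ ((1 + μ * lam) / (1 - μ * lam)) * c2) :=
  stmt_12_general G hGsymm lam μ hlam hμlam heig F hF a0 a hdom A M hA hM hMpd
end

section
/- Truncated-expansion preconditioning: with G_0 = I, symmetric G_1,…,G_K each of spectral radius ≤ λ, coefficients a_0^{(j)} > 0, Σ_{k=1}^K |a_k^{(j)}| ≤ μ a_0^{(j)}, and μλ < 1, define for each j the matrices S^{(j)} = Σ_{k=0}^{K} a_k^{(j)} G_k and T^{(j)} = Σ_{k=0}^{K−1} a_k^{(j)} G_k. Then (1 − μλ) v^T T^{(j)} v ≤ v^T S^{(j)} v ≤ (1 + μλ) v^T T^{(j)} v for all v ∈ ℝ^{N_P}. -/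
open Matrix

/-!
Write `Q k = vᵀ G_k v` and `N = vᵀ v`. By the spectral theorem `|Q k| ≤ λ N` for `1 ≤ k ≤ K`, so
`T = a₀ N + Σ_{k<K, k≥1} a_k Q_k ≥ a₀ N - λ N s` with `s = Σ_{1≤k<K} |a_k|`. The dominance
hypothesis `s + |a_K| ≤ μ a₀` and `μλ ≤ 1` then give `μ T ≥ |a_K| N`, hence the dropped term
satisfies `|a_K Q_K| ≤ λ |a_K| N ≤ μλ T`, and `S = T + a_K Q_K` lies between `(1 ∓ μλ) T`.
-/

theorem Matrix.IsSymm.abs_dotProduct_mulVec_le {n : Type*} [Fintype n] [DecidableEq n]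
    {A : Matrix n n ℝ} (hA : A.IsSymm) {lam : ℝ}
    (h : ∀ (c : ℝ) (v : n → ℝ), v ≠ 0 → A *ᵥ v = c • v → |c| ≤ lam)
    (v : n → ℝ) : |v ⬝ᵥ (A *ᵥ v)| ≤ lam * (v ⬝ᵥ v) := by
  have hH : A.IsHermitian := hA
  set U : Matrix n n ℝ := (hH.eigenvectorUnitary : Matrix n n ℝ)
  set w : n → ℝ := star U *ᵥ v with hw
  have heig_le : ∀ i, |hH.eigenvalues i| ≤ lam := fun i =>
    h _ _ ((WithLp.ofLp_eq_zero 2).ne.2 <| hH.eigenvectorBasis.orthonormal.ne_zero i)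
      (hH.mulVec_eigenvectorBasis i)
  have hvU : v ᵥ* U = w := by
    ext i; simp [w, vecMul, mulVec, dotProduct, mul_comm]
  have hnorm : v ⬝ᵥ v = ∑ i, w i * w i := by
    have hUU : U * star U = 1 := mem_unitaryGroup_iff.mp hH.eigenvectorUnitary.2
    calc v ⬝ᵥ v = v ⬝ᵥ ((U * star U) *ᵥ v) := by rw [hUU, one_mulVec]
      _ = ∑ i, w i * w i := by rw [← mulVec_mulVec, dotProduct_mulVec, hvU]; rfl
  have hquad : v ⬝ᵥ (A *ᵥ v) = ∑ i, hH.eigenvalues i * (w i * w i) := by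
    conv_lhs => rw [hH.spectral_theorem, Unitary.conjStarAlgAut_apply]
    rw [← mulVec_mulVec, ← mulVec_mulVec, dotProduct_mulVec, hvU, ← hw]
    simp [mulVec_diagonal, dotProduct, mul_left_comm]
  rw [hquad, hnorm, Finset.mul_sum]
  refine (Finset.abs_sum_le_sum_abs _ _).trans (Finset.sum_le_sum fun i _ => ?_)
  rw [abs_mul, abs_mul_self]
  exact mul_le_mul_of_nonneg_right (heig_le i) (mul_self_nonneg _)

theorem dotProduct_sum_smul_mulVec {n ι : Type*} [Fintype n] (s : Finset ι) (a : ι → ℝ)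
    (G : ι → Matrix n n ℝ) (v : n → ℝ) :
    v ⬝ᵥ ((∑ k ∈ s, a k • G k) *ᵥ v) = ∑ k ∈ s, a k * (v ⬝ᵥ (G k *ᵥ v)) := by
  simp only [sum_mulVec, dotProduct_sum, smul_mulVec, dotProduct_smul, smul_eq_mul]

theorem abs_mul_le_mul_sum_range {K : ℕ} (hK : 1 ≤ K) {a Q : ℕ → ℝ} {N lam μ : ℝ}
    (hN : 0 ≤ N) (hμ : 0 ≤ μ) (hμlam : μ * lam ≤ 1) (hQ0 : Q 0 = N)
    (hQ : ∀ k ∈ Finset.Ico 1 K, |Q k| ≤ lam * N)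
    (hdom : ∑ k ∈ Finset.Icc 1 K, |a k| ≤ μ * a 0) :
    |a K| * N ≤ μ * ∑ k ∈ Finset.range K, a k * Q k := by
  set s := ∑ k ∈ Finset.Ico 1 K, |a k|
  have hsplit : ∑ k ∈ Finset.Icc 1 K, |a k| = s + |a K| := by
    rw [← Finset.Ico_add_one_right_eq_Icc, Finset.sum_Ico_succ_top hK]
  have hrange :
      ∑ k ∈ Finset.range K, a k * Q k = a 0 * N + ∑ k ∈ Finset.Ico 1 K, a k * Q k := by
    rw [Finset.range_eq_Ico, Finset.sum_eq_sum_Ico_succ_bot (by omega), hQ0]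
  have htail : -(lam * N * s) ≤ ∑ k ∈ Finset.Ico 1 K, a k * Q k := by
    refine neg_le_of_abs_le ((Finset.abs_sum_le_sum_abs _ _).trans ?_)
    rw [Finset.mul_sum]
    refine Finset.sum_le_sum fun k hk => ?_
    rw [abs_mul, mul_comm]
    exact mul_le_mul_of_nonneg_right (hQ k hk) (abs_nonneg _)
  have hs : 0 ≤ s := Finset.sum_nonneg fun k _ => abs_nonneg _
  rw [hrange]
  nlinarith [mul_le_mul_of_nonneg_left htail hμ, mul_le_mul_of_nonneg_right hdom hN,
    mul_nonneg (mul_nonneg hs hN) (sub_nonneg.2 hμlam)]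

theorem stmt_13_general {NP : ℕ} (K : ℕ) (hK : 1 ≤ K)
    (G : ℕ → Matrix (Fin NP) (Fin NP) ℝ)
    (hG0 : G 0 = 1) (hGsymm : ∀ k, 1 ≤ k → k ≤ K → (G k).IsSymm)
    (lam μ : ℝ) (hlam : 0 ≤ lam) (hμ : 0 ≤ μ) (hμlam : μ * lam < 1)
    (heig : ∀ k, 1 ≤ k → k ≤ K →
      ∀ (c : ℝ) (v : Fin NP → ℝ), v ≠ 0 → G k *ᵥ v = c • v → |c| ≤ lam)
    (a : ℕ → ℝ)
    (hdom : ∑ k ∈ Finset.Icc 1 K, |a k| ≤ μ * a 0) :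
    ∀ v : Fin NP → ℝ,
      (1 - μ * lam) * (v ⬝ᵥ ((∑ k ∈ Finset.range K, a k • G k) *ᵥ v)) ≤
          v ⬝ᵥ ((∑ k ∈ Finset.range (K + 1), a k • G k) *ᵥ v) ∧
        v ⬝ᵥ ((∑ k ∈ Finset.range (K + 1), a k • G k) *ᵥ v) ≤
          (1 + μ * lam) * (v ⬝ᵥ ((∑ k ∈ Finset.range K, a k • G k) *ᵥ v)) := by
  intro v
  set Q : ℕ → ℝ := fun k => v ⬝ᵥ (G k *ᵥ v)
  set T := ∑ k ∈ Finset.range K, a k * Q k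
  have hQ : ∀ k, 1 ≤ k → k ≤ K → |Q k| ≤ lam * (v ⬝ᵥ v) := fun k h1 h2 =>
    (hGsymm k h1 h2).abs_dotProduct_mulVec_le (heig k h1 h2) v
  have hN : 0 ≤ v ⬝ᵥ v := by simpa using dotProduct_star_self_nonneg v
  have htrunc : |a K| * (v ⬝ᵥ v) ≤ μ * T :=
    abs_mul_le_mul_sum_range hK hN hμ hμlam.le (by simp [Q, hG0])
      (fun k hk => hQ k (Finset.mem_Ico.1 hk).1 (Finset.mem_Ico.1 hk).2.le) hdom
  have hlast : |a K * Q K| ≤ μ * lam * T := calc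
    |a K * Q K| ≤ |a K| * (lam * (v ⬝ᵥ v)) := by
      rw [abs_mul]; exact mul_le_mul_of_nonneg_left (hQ K hK le_rfl) (abs_nonneg _)
    _ = lam * (|a K| * (v ⬝ᵥ v)) := by ring
    _ ≤ lam * (μ * T) := mul_le_mul_of_nonneg_left htrunc hlam
    _ = μ * lam * T := by ring
  rw [dotProduct_sum_smul_mulVec, dotProduct_sum_smul_mulVec, Finset.sum_range_succ]
  obtain ⟨hlower, hupper⟩ := abs_le.1 hlast
  constructor <;> linarith

/-- element-level inequality for truncated-expansion preconditioning
(Lemma 4.4). -/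
theorem stmt_13 {NP : ℕ} (K : ℕ) (hK : 1 ≤ K)
    (G : ℕ → Matrix (Fin NP) (Fin NP) ℝ)
    (hG0 : G 0 = 1) (hGsymm : ∀ k, 1 ≤ k → k ≤ K → (G k).IsSymm)
    (lam μ : ℝ) (hlam : 0 ≤ lam) (hμ : 0 ≤ μ) (hμlam : μ * lam < 1)
    (heig : ∀ k, 1 ≤ k → k ≤ K →
      ∀ (c : ℝ) (v : Fin NP → ℝ), v ≠ 0 → G k *ᵥ v = c • v → |c| ≤ lam)
    (a : ℕ → ℝ) (ha0 : 0 < a 0)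
    (hdom : ∑ k ∈ Finset.Icc 1 K, |a k| ≤ μ * a 0) :
    ∀ v : Fin NP → ℝ,
      (1 - μ * lam) * (v ⬝ᵥ ((∑ k ∈ Finset.range K, a k • G k) *ᵥ v)) ≤
          v ⬝ᵥ ((∑ k ∈ Finset.range (K + 1), a k • G k) *ᵥ v) ∧
        v ⬝ᵥ ((∑ k ∈ Finset.range (K + 1), a k • G k) *ᵥ v) ≤
          (1 + μ * lam) * (v ⬝ᵥ ((∑ k ∈ Finset.range K, a k • G k) *ᵥ v)) :=
  stmt_13_general K hK G hG0 hGsymm lam μ hlam hμ hμlam heig a hdom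
end

section
/- Strengthened Cauchy–Bunyakowski–Schwarz bound from spectral equivalence: let V = U ⊕ W be a direct-sum decomposition of a finite-dimensional inner product space with inner product (·,·)_A, and define (u,v)_M = (u_U, v_U)_A + (u_W, v_W)_A for the unique decompositions u = u_U + u_W, v = v_U + v_W. Suppose c_lo (v,v)_M ≤ (v,v)_A ≤ c_hi (v,v)_M for all v ∈ V with c_lo = 2 − c_hi > 0. Then the CBS constant γ = sup{ (u,w)_A / (‖u‖_A ‖w‖_A) : 0 ≠ u ∈ U, 0 ≠ w ∈ W } satisfies γ ≤ c_hi − 1. -/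
/-! Rescale `u` and `w` to the common norm `‖u‖ * ‖w‖`. For `x, y` of equal norm the
expansion `‖x + y‖² = ‖x‖² + 2⟪x, y⟫ + ‖y‖²` turns the upper spectral bound
`‖x + y‖² ≤ c_hi (‖x‖² + ‖y‖²)` into `⟪x, y⟫ ≤ (c_hi - 1) ‖x‖²`, which after undoing the scaling
is the claimed bound on the cosine. -/

section

open scoped InnerProductSpace

variable {F : Type*} [NormedAddCommGroup F] [InnerProductSpace ℝ F]

theorem real_inner_le_of_norm_add_sq_le_of_norm_eq {x y : F} {c : ℝ} (hxy : ‖x‖ = ‖y‖)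
    (h : ‖x + y‖ ^ 2 ≤ c * (‖x‖ ^ 2 + ‖y‖ ^ 2)) : ⟪x, y⟫_ℝ ≤ (c - 1) * ‖x‖ ^ 2 := by
  rw [norm_add_sq_real, ← hxy] at h
  linarith

theorem real_inner_le_of_norm_smul_add_sq_le {x y : F} {c : ℝ} (hx : x ≠ 0) (hy : y ≠ 0)
    (h : ‖‖y‖ • x + ‖x‖ • y‖ ^ 2 ≤ c * (‖‖y‖ • x‖ ^ 2 + ‖‖x‖ • y‖ ^ 2)) :
    ⟪x, y⟫_ℝ ≤ (c - 1) * (‖x‖ * ‖y‖) := by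
  have hnorm : ‖‖y‖ • x‖ = ‖x‖ * ‖y‖ := by rw [norm_smul, norm_norm, mul_comm]
  have hscaled := real_inner_le_of_norm_add_sq_le_of_norm_eq
    (hnorm.trans (by rw [norm_smul, norm_norm])) h
  rw [real_inner_smul_left, real_inner_smul_right, hnorm] at hscaled
  have hpos : 0 < ‖x‖ * ‖y‖ := by positivity
  refine le_of_mul_le_mul_left ?_ hpos
  linarith

end

theorem stmt_18_general {V : Type*} [NormedAddCommGroup V] [InnerProductSpace ℝ V]
    (U W : Submodule ℝ V)
    (clo chi : ℝ)
    (hequiv : ∀ u ∈ U, ∀ w ∈ W,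
      clo * (‖u‖ ^ 2 + ‖w‖ ^ 2) ≤ ‖u + w‖ ^ 2 ∧
        ‖u + w‖ ^ 2 ≤ chi * (‖u‖ ^ 2 + ‖w‖ ^ 2)) :
    ∀ u ∈ U, ∀ w ∈ W, u ≠ 0 → w ≠ 0 →
      (inner ℝ u w : ℝ) / (‖u‖ * ‖w‖) ≤ chi - 1 := by
  intro u hu w hw hu0 hw0
  rw [div_le_iff₀ (by positivity)]
  exact real_inner_le_of_norm_smul_add_sq_le hu0 hw0
    (hequiv _ (U.smul_mem _ hu) _ (W.smul_mem _ hw)).2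

/-- strengthened Cauchy–Bunyakowski–Schwarz bound from the spectral
equivalence of the splitting-based inner product (Remark 4.13). -/
theorem stmt_18 {V : Type*} [NormedAddCommGroup V] [InnerProductSpace ℝ V]
    [FiniteDimensional ℝ V] (U W : Submodule ℝ V) (hcompl : IsCompl U W)
    (clo chi : ℝ) (hclo : 0 < clo) (hsum : clo = 2 - chi)
    (hequiv : ∀ u ∈ U, ∀ w ∈ W,
      clo * (‖u‖ ^ 2 + ‖w‖ ^ 2) ≤ ‖u + w‖ ^ 2 ∧
        ‖u + w‖ ^ 2 ≤ chi * (‖u‖ ^ 2 + ‖w‖ ^ 2)) :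
    ∀ u ∈ U, ∀ w ∈ W, u ≠ 0 → w ≠ 0 →
      (inner ℝ u w : ℝ) / (‖u‖ * ‖w‖) ≤ chi - 1 :=
  stmt_18_general U W clo chi hequiv
end
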